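/- arXiv:1406.7608 — 2 statements merged into one kernel-verified Lean document; each statement's English description precedes it below -/
import Mathlib

section
/- The parameterized synthesis problem of interleaving token rings with no global inputs for parameterized specifications ∀i. A_{∀i.ass(i)} φ(i), where φ(i) and ass(i) are LTL formulas over the inputs and outputs of process i, reduces to the synthesis problem for the token ring of size 2: there exists a process template P with P^{R(n)} ⊨ ∀i. A_{∀i.ass(i)} φ(i) for all n ≥ 2 if and only if there exists a process template P with P^{R(2)} ⊨ ∀i. A_{∀i.ass(i)} φ(i). -/
/-!
The nontrivial direction transfers a template that works in the ring of size two to rings of any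
size `n ≥ 2`. Take a run of the ring of size `n` and a process `j` moving infinitely often, and
pair `j` with a partner `w`: its ring predecessor if `j` starts with the token, the initial token
holder otherwise. A process receives the token exactly as often as its predecessor sends it, and a
process that does not start with the token sends it at most as often as it receives it; going
around the ring, `j` therefore never receives the token more often than `w` has sent it. This makes
it possible to interleave the local runs of `j` and `w` into a run of the ring of size two, merging
each send of one with the matching receive of the other. If `w` will never receive a token that
`j` sends, process 1 receives it in a transition of its own and is frozen; `j` then never gets the
token back. Process 0 replays the local run of `j`, and process 1 replays that of `w` whenever it
moves infinitely often, so the assumption transfers from the large ring to the small one and the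
guarantee back.
-/

/-! ## Deeply embedded LTL -/

/-- LTL formulas over atomic propositions of type `α`. -/
inductive LTL (α : Type) : Type
  | tru : LTL α
  | atom : α → LTL α
  | neg : LTL α → LTL α
  | conj : LTL α → LTL α → LTL α
  | next : LTL α → LTL α
  | untl : LTL α → LTL α → LTL α

namespace LTL

/-- Satisfaction of an LTL formula at position `k` of the infinite word `w`
(a word assigns to each position the set of atomic propositions holding there). -/
def Sat {α : Type} (w : ℕ → α → Prop) : LTL α → ℕ → Prop
  | tru, _ => True
  | atom a, k => w k a
  | neg φ, k => ¬ Sat w φ k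
  | conj φ ψ, k => Sat w φ k ∧ Sat w ψ k
  | next φ, k => Sat w φ (k + 1)
  | untl φ ψ, k => ∃ m, k ≤ m ∧ Sat w ψ m ∧ ∀ l, k ≤ l → l < m → Sat w φ l

/-- `LTL\X` : formulas not using the next-time operator. -/
def NoNext {α : Type} : LTL α → Prop
  | tru => True
  | atom _ => True
  | neg φ => NoNext φ
  | conj φ ψ => NoNext φ ∧ NoNext ψ
  | next _ => False
  | untl φ ψ => NoNext φ ∧ NoNext ψ

/-- Implication, as a derived connective. -/
def imp {α : Type} (φ ψ : LTL α) : LTL α := neg (conj φ (neg ψ))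

/-- "Eventually" (◇). -/
def ev {α : Type} (φ : LTL α) : LTL α := untl tru φ

/-- "Always" (□). -/
def alw {α : Type} (φ : LTL α) : LTL α := neg (ev (neg φ))

end LTL

/-- Boolean (propositional) formulas over atoms of type `α`. -/
inductive PropForm (α : Type) : Type
  | tru : PropForm α
  | atom : α → PropForm α
  | neg : PropForm α → PropForm α
  | conj : PropForm α → PropForm α → PropForm α

/-- A propositional formula over input variables, seen as an LTL formula over
output-or-input atoms (inputs are injected on the right). -/
def PropForm.toLTL {O I : Type} : PropForm I → LTL (O ⊕ I)
  | .tru => .tru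
  | .atom a => .atom (Sum.inr a)
  | .neg p => .neg p.toLTL
  | .conj p q => .conj p.toLTL q.toLTL

/-! ## Process templates and token rings -/

/-- The ring successor `v ⊕ 1` of a vertex of the ring `R(n)`. -/
def ringSucc {n : ℕ} (v : Fin n) : Fin n :=
  ⟨(v.val + 1) % n, Nat.mod_lt _ (Nat.lt_of_le_of_lt (Nat.zero_le _) v.isLt)⟩

/-- The raw data of a process: token states, output labelling, the two initial
states (with/without token) and the transition relation, over output variables `O`
and input variables `I` (an input letter is a set of input variables). -/
structure RawProc (Q O I : Type) : Type where
  tok : Q → Prop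
  lam : Q → O → Prop
  iotaT : Q
  iotaN : Q
  delta : Q → (I → Prop) → Q → Prop

namespace RawProc

variable {Q O I : Type}

/-- Internal transition of the token ring: the processes in `M` simultaneously take
transitions, none of them sends (`snd`) or receives (`rcv`) the token, all others keep
their state. -/
def internalStep (P : RawProc Q O I) (snd : O) (rcv : I) {n : ℕ} (M : Set (Fin n))
    (s : Fin n → Q) (inp : Fin n → I → Prop) (s' : Fin n → Q) : Prop :=
  (∀ v ∈ M, ¬ P.lam (s v) snd ∧ ¬ inp v rcv ∧ P.delta (s v) (inp v) (s' v)) ∧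
    ∀ v, v ∉ M → s' v = s v

/-- Token-passing transition with sender `v`: `v ∈ M` is the only process of `M`
outputting `snd`, its ring successor is in `M` and is the only process of `M` reading
`rcv`; all processes of `M` take transitions, all others keep their state. -/
def tokenStepFrom (P : RawProc Q O I) (snd : O) (rcv : I) {n : ℕ} (v : Fin n)
    (M : Set (Fin n)) (s : Fin n → Q) (inp : Fin n → I → Prop) (s' : Fin n → Q) : Prop :=
  v ∈ M ∧ ringSucc v ∈ M ∧
  P.lam (s v) snd ∧ (∀ u ∈ M, u ≠ v → ¬ P.lam (s u) snd) ∧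
  inp (ringSucc v) rcv ∧ (∀ u ∈ M, u ≠ ringSucc v → ¬ inp u rcv) ∧
  (∀ u ∈ M, P.delta (s u) (inp u) (s' u)) ∧
  ∀ u, u ∉ M → s' u = s u

/-- Global transition of the *fully asynchronous* token ring. -/
def asyncStep (P : RawProc Q O I) (snd : O) (rcv : I) {n : ℕ} (M : Set (Fin n))
    (s : Fin n → Q) (inp : Fin n → I → Prop) (s' : Fin n → Q) : Prop :=
  P.internalStep snd rcv M s inp s' ∨ ∃ v, P.tokenStepFrom snd rcv v M s inp s'

/-- Global transition of the *interleaving* token ring: exactly one process takes an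
internal transition, or one process passes the token to its ring successor. -/
def interleavingStep (P : RawProc Q O I) (snd : O) (rcv : I) {n : ℕ} (M : Set (Fin n))
    (s : Fin n → Q) (inp : Fin n → I → Prop) (s' : Fin n → Q) : Prop :=
  (∃ v : Fin n, M = {v} ∧ P.internalStep snd rcv M s inp s') ∨
  (∃ v : Fin n, M = {v, ringSucc v} ∧ P.tokenStepFrom snd rcv v M s inp s')

/-- Global transition of the *synchronous* token ring: all processes move. -/
def syncStep (P : RawProc Q O I) (snd : O) (rcv : I) {n : ℕ} (M : Set (Fin n))
    (s : Fin n → Q) (inp : Fin n → I → Prop) (s' : Fin n → Q) : Prop :=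
  M = Set.univ ∧ P.asyncStep snd rcv M s inp s'

/-- Condition (a): in every sending state the process ignores its inputs —
there is a unique successor, the same for every input letter. -/
def CondA (P : RawProc Q O I) (snd : O) : Prop :=
  ∀ q, P.lam q snd → ∃ q', ∀ (ins : I → Prop) (q'' : Q), P.delta q ins q'' ↔ q'' = q'

/-- The axioms making raw process data a process template (for distinguished output
`snd` and input `rcv`): the initial states have/lack the token, only token states can
output `snd`, transitions respect the token structure, and the transition relation is
non-terminating. -/
def IsTemplate (P : RawProc Q O I) (snd : O) (rcv : I) : Prop :=
  P.tok P.iotaT ∧ ¬ P.tok P.iotaN ∧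
  (∀ q, P.lam q snd → P.tok q) ∧
  (∀ q ins q', P.delta q ins q' →
      (P.tok q → ¬ ins rcv) ∧
      (P.lam q snd → ¬ P.tok q') ∧
      (P.tok q → ¬ P.lam q snd → P.tok q') ∧
      (¬ P.tok q → ins rcv → P.tok q') ∧
      (¬ P.tok q → ¬ ins rcv → ¬ P.tok q')) ∧
  (∀ q ins, (P.tok q → ¬ ins rcv) → ∃ q', P.delta q ins q')

end RawProc

/-- A process template over output variables `O` (with distinguished `snd`)
and input variables `I` (with distinguished `rcv`): a finite-state labelled
transition system satisfying the token-ring template axioms. -/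
structure Template (O I : Type) (snd : O) (rcv : I) : Type 1 where
  Q : Type
  P : RawProc Q O I
  finQ : Finite Q
  ax : P.IsTemplate snd rcv

/-- A process template together with a local fairness condition `A_loc` (over the
input and output variables) and the requirement (†): from every token state, under
any input sequence such that the resulting local input/output sequence satisfies the
fairness condition, the process eventually reaches a state sending the token. -/
structure TemplateF (O I : Type) (snd : O) (rcv : I) extends Template O I snd rcv where
  fairCond : (ℕ → (I → Prop) × (O → Prop)) → Prop
  tokenLive : ∀ q, P.tok q → ∀ (ins : ℕ → I → Prop) (path : ℕ → Q),
    path 0 = q → (∀ k, P.delta (path k) (ins k) (path (k + 1))) →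
    fairCond (fun k => (ins k, P.lam (path k))) → ∃ k, P.lam (path k) snd

/-- The type of global step relations of a ring of `n` processes with state set `Q`
and input variables `I`. -/
abbrev StepRel (Q I : Type) (n : ℕ) : Type :=
  Set (Fin n) → (Fin n → Q) → (Fin n → I → Prop) → (Fin n → Q) → Prop

/-- A run of a token-ring system built from the process `P`, with global inputs
designated by `isGlob` (global inputs are read identically by all processes),
ring size `n`, and global step relation `R`: an infinite sequence of global states,
input assignments and scheduled sets `M_k`, starting in an initial global state
(each process in one of its initial states, exactly one process having the token). -/
structure SysRun {Q O I : Type} (P : RawProc Q O I) (isGlob : I → Prop) (n : ℕ)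
    (R : StepRel Q I n) : Type where
  state : ℕ → Fin n → Q
  inp : ℕ → Fin n → I → Prop
  sched : ℕ → Set (Fin n)
  init_state : ∀ v, state 0 v = P.iotaT ∨ state 0 v = P.iotaN
  init_token : ∃! v, P.tok (state 0 v)
  glob_consistent : ∀ k v w a, isGlob a → (inp k v a ↔ inp k w a)
  step : ∀ k, R (sched k) (state k) (inp k) (state (k + 1))

namespace SysRun

variable {Q O I : Type} {P : RawProc Q O I} {isGlob : I → Prop} {n : ℕ} {R : StepRel Q I n}

/-- Process `j` makes transitions infinitely often along the run. -/
def MovesInf (x : SysRun P isGlob n R) (j : Fin n) : Prop :=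
  {k : ℕ | j ∈ x.sched k}.Infinite

/-- The position (in the run) of the `t`-th transition of process `j`. -/
noncomputable def localIdx (x : SysRun P isGlob n R) (j : Fin n) (t : ℕ) : ℕ :=
  Nat.nth (fun k => j ∈ x.sched k) t

/-- The local run of process `j`, as an infinite word over the atomic propositions
`O ⊕ I` (outputs and inputs of process `j`): the projection of the run to the
positions where `j` makes a transition. -/
noncomputable def localWord (x : SysRun P isGlob n R) (j : Fin n) : ℕ → O ⊕ I → Prop :=
  fun t => Sum.elim (P.lam (x.state (x.localIdx j t) j)) (x.inp (x.localIdx j t) j)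

/-- The local run of process `j` satisfies the LTL formula `φ` over the inputs
and outputs of a single process (vacuously, if `j` moves only finitely often). -/
def LocalSat (x : SysRun P isGlob n R) (φ : LTL (O ⊕ I)) (j : Fin n) : Prop :=
  x.MovesInf j → LTL.Sat (x.localWord j) φ 0

/-- The global output word of the pair of processes `(i, j)`, over the atomic
propositions `O ⊕ O` (outputs of `i` and of `j`). -/
def outWord2 (x : SysRun P isGlob n R) (i j : Fin n) : ℕ → O ⊕ O → Prop :=
  fun k => Sum.elim (P.lam (x.state k i)) (P.lam (x.state k j))

/-- The run satisfies the 2-indexed formula `ψ(i,j)` (over outputs only),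
evaluated on the global output sequence. -/
def Sat2At (x : SysRun P isGlob n R) (ψ : LTL (O ⊕ O)) (i j : Fin n) : Prop :=
  LTL.Sat (x.outWord2 i j) ψ 0

end SysRun

/-- The system satisfies `A_{∀i.ass(i)} ∀j.φ(j)`: every run all of whose local runs
satisfy `ass` has all of its local runs satisfying `φ`. -/
def SatSpec1 {Q O I : Type} (P : RawProc Q O I) (isGlob : I → Prop) (n : ℕ)
    (R : StepRel Q I n) (ass φ : LTL (O ⊕ I)) : Prop :=
  ∀ x : SysRun P isGlob n R, (∀ i, x.LocalSat ass i) → ∀ j, x.LocalSat φ j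

/-- The system satisfies `A_{∀i.ass(i)} ∀i,j.ψ(i,j)`. -/
def SatSpec2 {Q O I : Type} (P : RawProc Q O I) (isGlob : I → Prop) (n : ℕ)
    (R : StepRel Q I n) (ass : LTL (O ⊕ I)) (ψ : LTL (O ⊕ O)) : Prop :=
  ∀ x : SysRun P isGlob n R, (∀ i, x.LocalSat ass i) → ∀ i j, i ≠ j → x.Sat2At ψ i j

/-- The system satisfies `∀i,j. A ψ(i,j)` (no assumptions). -/
def SatSpec2NoAss {Q O I : Type} (P : RawProc Q O I) (isGlob : I → Prop) (n : ℕ)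
    (R : StepRel Q I n) (ψ : LTL (O ⊕ O)) : Prop :=
  ∀ x : SysRun P isGlob n R, ∀ i j, i ≠ j → x.Sat2At ψ i j

theorem Nat.count_eq_count_of_forall_not {p : ℕ → Prop} [DecidablePred p] {a b : ℕ}
    (hab : a ≤ b) (h : ∀ m, a ≤ m → m < b → ¬ p m) : Nat.count p b = Nat.count p a :=
  le_antisymm
    (not_lt.1 fun hlt =>
      let ⟨m, hm, hpm⟩ := Nat.exists_of_count_lt_count hlt
      h m hm.1 hm.2 hpm)
    (Nat.count_monotone p hab)

theorem ringSucc_eq_add_one {n : ℕ} [NeZero n] (v : Fin n) : ringSucc v = v + 1 := by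
  ext
  simp [ringSucc, Fin.val_add]

theorem ringSucc_injective {n : ℕ} : Function.Injective (@ringSucc n) := by
  intro u v h
  have : NeZero n := NeZero.of_pos u.pos
  simpa [ringSucc_eq_add_one] using h

theorem ringSucc_sub_one {n : ℕ} [NeZero n] (v : Fin n) : ringSucc (v - 1) = v := by
  simp [ringSucc_eq_add_one]

theorem sub_one_ne_self {n : ℕ} [NeZero n] (hn : 2 ≤ n) (v : Fin n) : v - 1 ≠ v := by
  rw [Ne, sub_eq_self, ← Fin.val_eq_val, Fin.val_one', Fin.val_zero, Nat.mod_eq_of_lt hn]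
  omega

@[simp]
theorem ringSucc_zero_fin_two : ringSucc (0 : Fin 2) = 1 := rfl

@[simp]
theorem ringSucc_one_fin_two : ringSucc (1 : Fin 2) = 0 := rfl

theorem Fin.eq_ringSucc_of_ne {u v : Fin 2} (h : u ≠ v) : u = ringSucc v := by
  revert u v; decide

theorem Fin.eq_of_ne_ringSucc {u v : Fin 2} (h : u ≠ ringSucc v) : u = v := by
  revert u v; decide

theorem Fin.existsUnique_fin_two {p : Fin 2 → Prop} (h : p 0 ↔ ¬ p 1) : ∃! v, p v := by
  by_cases h0 : p 0
  · refine ⟨0, h0, fun v hv => ?_⟩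
    fin_cases v
    · rfl
    · exact absurd hv (h.1 h0)
  · refine ⟨1, not_not.1 (mt h.2 h0), fun v hv => ?_⟩
    fin_cases v
    · exact absurd hv h0
    · rfl

namespace RawProc.IsTemplate

variable {Q O I : Type} {P : RawProc Q O I} {snd : O} {rcv : I} {q q' : Q} {i : I → Prop}

theorem tok_of_lam (hP : P.IsTemplate snd rcv) (h : P.lam q snd) : P.tok q :=
  hP.2.2.1 q h

theorem not_rcv_of_tok (hP : P.IsTemplate snd rcv) (hd : P.delta q i q') (h : P.tok q) :
    ¬ i rcv :=
  (hP.2.2.2.1 q i q' hd).1 h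

theorem not_tok_of_lam (hP : P.IsTemplate snd rcv) (hd : P.delta q i q') (h : P.lam q snd) :
    ¬ P.tok q' :=
  (hP.2.2.2.1 q i q' hd).2.1 h

theorem tok_of_not_lam (hP : P.IsTemplate snd rcv) (hd : P.delta q i q') (h : P.tok q)
    (hs : ¬ P.lam q snd) : P.tok q' :=
  (hP.2.2.2.1 q i q' hd).2.2.1 h hs

theorem tok_of_rcv (hP : P.IsTemplate snd rcv) (hd : P.delta q i q') (h : ¬ P.tok q)
    (hr : i rcv) : P.tok q' :=
  (hP.2.2.2.1 q i q' hd).2.2.2.1 h hr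

theorem not_tok_of_not_rcv (hP : P.IsTemplate snd rcv) (hd : P.delta q i q') (h : ¬ P.tok q)
    (hr : ¬ i rcv) : ¬ P.tok q' :=
  (hP.2.2.2.1 q i q' hd).2.2.2.2 h hr

theorem exists_delta (hP : P.IsTemplate snd rcv) (h : P.tok q → ¬ i rcv) :
    ∃ q', P.delta q i q' :=
  hP.2.2.2.2 q i h

end RawProc.IsTemplate

namespace RawProc

variable {Q O I : Type} (P : RawProc Q O I) (snd : O) (rcv : I) {s s' : Fin 2 → Q}
  {inp : Fin 2 → I → Prop}

theorem interleavingStep_fin_two_single (v : Fin 2) (hs : ¬ P.lam (s v) snd) (hr : ¬ inp v rcv)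
    (hd : P.delta (s v) (inp v) (s' v)) (hstay : s' (ringSucc v) = s (ringSucc v)) :
    P.interleavingStep snd rcv {v} s inp s' := by
  refine .inl ⟨v, rfl, ?_, fun u hu => ?_⟩
  · simpa using ⟨hs, hr, hd⟩
  · rwa [Fin.eq_ringSucc_of_ne hu]

theorem interleavingStep_fin_two_pass (v : Fin 2) (hs : P.lam (s v) snd)
    (hns : ¬ P.lam (s (ringSucc v)) snd) (hr : inp (ringSucc v) rcv) (hnr : ¬ inp v rcv)
    (hd : ∀ u, P.delta (s u) (inp u) (s' u)) :
    P.interleavingStep snd rcv {0, 1} s inp s' := by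
  have hM : ({0, 1} : Set (Fin 2)) = {v, ringSucc v} := by
    fin_cases v
    · rfl
    · exact Set.pair_comm _ _
  refine .inr ⟨v, hM, ?_⟩
  rw [hM]
  refine ⟨Set.mem_insert _ _, Set.mem_insert_of_mem _ rfl, hs, fun u _ hu => ?_, hr,
    fun u _ hu => ?_, fun u _ => hd u, fun u hu => absurd ?_ hu⟩
  · rwa [Fin.eq_ringSucc_of_ne hu]
  · rwa [Fin.eq_of_ne_ringSucc hu]
  · by_cases h : u = v
    · exact h ▸ Set.mem_insert _ _
    · exact Fin.eq_ringSucc_of_ne h ▸ Set.mem_insert_of_mem _ rfl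

end RawProc

namespace SysRun

open scoped Classical

variable {Q O I : Type} {P : RawProc Q O I} {isGlob : I → Prop} {n : ℕ}

section Events

variable {R : StepRel Q I n} (x : SysRun P isGlob n R) {v : Fin n} {k₀ k l : ℕ}

def Receives (rcv : I) (v : Fin n) (k : ℕ) : Prop :=
  v ∈ x.sched k ∧ x.inp k v rcv

def Sends (snd : O) (v : Fin n) (k : ℕ) : Prop :=
  v ∈ x.sched k ∧ P.lam (x.state k v) snd

def IsNextMove (v : Fin n) (k₀ k : ℕ) : Prop :=
  k₀ ≤ k ∧ v ∈ x.sched k ∧ ∀ m, k₀ ≤ m → m < k → v ∉ x.sched m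

theorem exists_isNextMove_le (hl : k₀ ≤ l) (hv : v ∈ x.sched l) :
    ∃ k, x.IsNextMove v k₀ k ∧ k ≤ l := by
  have h : ∃ k, k₀ ≤ k ∧ v ∈ x.sched k := ⟨l, hl, hv⟩
  exact ⟨Nat.find h, ⟨(Nat.find_spec h).1, (Nat.find_spec h).2,
    fun m hm hmk hvm => Nat.find_min h hmk ⟨hm, hvm⟩⟩, Nat.find_min' h ⟨hl, hv⟩⟩

theorem MovesInf.exists_isNextMove {x : SysRun P isGlob n R} (h : x.MovesInf v) (k₀ : ℕ) :
    ∃ k, x.IsNextMove v k₀ k :=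
  let ⟨_, hl, hkl⟩ := h.exists_gt k₀
  let ⟨k, hk, _⟩ := x.exists_isNextMove_le hkl.le hl
  ⟨k, hk⟩

variable {x}

theorem IsNextMove.le_of_mem (h : x.IsNextMove v k₀ k) (hl : k₀ ≤ l) (hv : v ∈ x.sched l) :
    k ≤ l :=
  not_lt.1 fun hlk => h.2.2 l hl hlk hv

theorem IsNextMove.count_eq {E : ℕ → Prop} (h : x.IsNextMove v k₀ k)
    (hE : ∀ m, E m → v ∈ x.sched m) : Nat.count E k = Nat.count E k₀ :=
  Nat.count_eq_count_of_forall_not h.1 fun m hm hmk hEm => h.2.2 m hm hmk (hE m hEm)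

theorem IsNextMove.count_succ {E : ℕ → Prop} (h : x.IsNextMove v k₀ k)
    (hE : ∀ m, E m → v ∈ x.sched m) :
    Nat.count E (k + 1) = Nat.count E k₀ + if E k then 1 else 0 := by
  rw [Nat.count_succ, h.count_eq hE]

end Events

section Interleaving

variable {snd : O} {rcv : I} (x : SysRun P isGlob n (P.interleavingStep snd rcv)) {v : Fin n}
  {k₀ k : ℕ}

theorem state_succ_of_not_mem (hv : v ∉ x.sched k) : x.state (k + 1) v = x.state k v := by
  rcases x.step k with ⟨_, _, hint⟩ | ⟨_, _, htok⟩
  · exact hint.2 v hv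
  · exact htok.2.2.2.2.2.2.2 v hv

theorem delta_of_mem (hv : v ∈ x.sched k) :
    P.delta (x.state k v) (x.inp k v) (x.state (k + 1) v) := by
  rcases x.step k with ⟨_, _, hint⟩ | ⟨_, _, htok⟩
  · exact (hint.1 v hv).2.2
  · exact htok.2.2.2.2.2.2.1 v hv

variable {x}

theorem IsNextMove.state_eq (h : x.IsNextMove v k₀ k) : x.state k v = x.state k₀ v := by
  obtain ⟨hk, -, hfst⟩ := h
  induction k, hk using Nat.le_induction with
  | base => rfl
  | succ m hm ih =>
    rw [x.state_succ_of_not_mem (hfst m hm m.lt_succ_self)]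
    exact ih fun l hl hlm => hfst l hl (hlm.trans m.lt_succ_self)

variable (x)

theorem receives_ringSucc (u : Fin n) : x.Receives rcv (ringSucc u) = x.Sends snd u := by
  ext k
  rcases x.step k with ⟨_, _, hint⟩ | ⟨v, _, hv, hsv, hsnd, honly_snd, hrcv, honly_rcv, -⟩
  · exact ⟨fun h => absurd h.2 (hint.1 _ h.1).2.1, fun h => absurd h.2 (hint.1 _ h.1).1⟩
  · have hsends : x.Sends snd u k ↔ u = v :=
      ⟨fun h => by_contra fun huv => honly_snd u h.1 huv h.2, fun h => h ▸ ⟨hv, hsnd⟩⟩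
    have hreceives : x.Receives rcv (ringSucc u) k ↔ ringSucc u = ringSucc v :=
      ⟨fun h => by_contra fun huv => honly_rcv _ h.1 huv h.2, fun h => h ▸ ⟨hsv, hrcv⟩⟩
    rw [hsends, hreceives, ringSucc_injective.eq_iff]

variable {x}

theorem Sends.not_rcv (hP : P.IsTemplate snd rcv) (h : x.Sends snd v k) : ¬ x.inp k v rcv :=
  hP.not_rcv_of_tok (x.delta_of_mem h.1) (hP.tok_of_lam h.2)

theorem Receives.not_tok (hP : P.IsTemplate snd rcv) (h : x.Receives rcv v k) :
    ¬ P.tok (x.state k v) :=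
  fun ht => hP.not_rcv_of_tok (x.delta_of_mem h.1) ht h.2

theorem Receives.not_sends (hP : P.IsTemplate snd rcv) (h : x.Receives rcv v k) :
    ¬ x.Sends snd v k :=
  fun hs => hs.not_rcv hP h.2

variable (x)

theorem count_sends_add_tok (hP : P.IsTemplate snd rcv) (v : Fin n) (K : ℕ) :
    Nat.count (x.Sends snd v) K + (if P.tok (x.state K v) then 1 else 0) =
      Nat.count (x.Receives rcv v) K + (if P.tok (x.state 0 v) then 1 else 0) := by
  induction K with
  | zero => simp
  | succ k ih =>
    rw [Nat.count_succ, Nat.count_succ]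
    by_cases hv : v ∈ x.sched k
    · have hd := x.delta_of_mem hv
      have := hP.not_rcv_of_tok hd
      have := hP.not_tok_of_lam hd
      have := hP.tok_of_not_lam hd
      have := hP.tok_of_rcv hd
      have := hP.not_tok_of_not_rcv hd
      have := hP.tok_of_lam (q := x.state k v)
      simp only [Sends, Receives, hv, true_and]
      split_ifs at ih ⊢ <;> simp_all
    · simp only [Sends, Receives, hv, false_and, if_false, x.state_succ_of_not_mem hv]
      omega

theorem count_sends_le_count_receives (hP : P.IsTemplate snd rcv) {v : Fin n}
    (h0 : ¬ P.tok (x.state 0 v)) (K : ℕ) :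
    Nat.count (x.Sends snd v) K ≤ Nat.count (x.Receives rcv v) K := by
  have := x.count_sends_add_tok hP v K
  rw [if_neg h0] at this
  omega

theorem tok_iff_not_tok_of_count_eq (hP : P.IsTemplate snd rcv) {j w : Fin n} {a b : ℕ}
    (h0 : P.tok (x.state 0 j) ↔ ¬ P.tok (x.state 0 w))
    (hr : Nat.count (x.Receives rcv j) a = Nat.count (x.Sends snd w) b)
    (hs : Nat.count (x.Sends snd j) a = Nat.count (x.Receives rcv w) b) :
    P.tok (x.state a j) ↔ ¬ P.tok (x.state b w) := by
  have hj := x.count_sends_add_tok hP j a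
  have hw := x.count_sends_add_tok hP w b
  by_cases hj0 : P.tok (x.state 0 j) <;> by_cases hw0 : P.tok (x.state 0 w) <;>
    by_cases hja : P.tok (x.state a j) <;> by_cases hwb : P.tok (x.state b w) <;>
    simp_all

theorem not_sends_of_not_receives (hP : P.IsTemplate snd rcv) {v : Fin n} {K : ℕ}
    (h0 : ¬ P.tok (x.state K v)) (hr : ∀ k, K ≤ k → ¬ x.Receives rcv v k) :
    ∀ k, K ≤ k → ¬ x.Sends snd v k := by
  suffices hnt : ∀ k, K ≤ k → ¬ P.tok (x.state k v) from
    fun k hk hs => hnt k hk (hP.tok_of_lam hs.2)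
  intro k hk
  induction k, hk using Nat.le_induction with
  | base => exact h0
  | succ k hk ih =>
    by_cases hv : v ∈ x.sched k
    · exact hP.not_tok_of_not_rcv (x.delta_of_mem hv) ih fun h => hr k hk ⟨hv, h⟩
    · rwa [x.state_succ_of_not_mem hv]

open Fin.NatCast in
theorem count_receives_le_count_sends_of_tok (hP : P.IsTemplate snd rcv) {v₀ j : Fin n}
    (h0 : ∀ v, P.tok (x.state 0 v) → v = v₀) (hj : j ≠ v₀) (K : ℕ) :
    Nat.count (x.Receives rcv j) K ≤ Nat.count (x.Sends snd v₀) K := by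
  have : NeZero n := NeZero.of_pos j.pos
  -- no process strictly between `v₀` and `j` starts with the token, so along that arc the
  -- number of receives can only drop
  have key : ∀ d : ℕ, d + 1 < n →
      Nat.count (x.Receives rcv (v₀ + ((d + 1 : ℕ) : Fin n))) K ≤
        Nat.count (x.Sends snd v₀) K := by
    intro d hd
    induction d with
    | zero =>
      rw [zero_add, Nat.cast_one, ← ringSucc_eq_add_one, x.receives_ringSucc]
    | succ d ih =>
      have hne : v₀ + ((d + 1 : ℕ) : Fin n) ≠ v₀ := by
        rw [Ne, add_eq_left, Fin.natCast_eq_zero]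
        exact Nat.not_dvd_of_pos_of_lt d.succ_pos (by omega)
      calc Nat.count (x.Receives rcv (v₀ + ((d + 1 + 1 : ℕ) : Fin n))) K
          = Nat.count (x.Sends snd (v₀ + ((d + 1 : ℕ) : Fin n))) K := by
            rw [Nat.cast_succ, ← add_assoc, ← ringSucc_eq_add_one, x.receives_ringSucc]
        _ ≤ Nat.count (x.Receives rcv (v₀ + ((d + 1 : ℕ) : Fin n))) K :=
            x.count_sends_le_count_receives hP (fun h => hne (h0 _ h)) K
        _ ≤ Nat.count (x.Sends snd v₀) K := ih (by omega)
  obtain ⟨d, hd⟩ : ∃ d, (j - v₀).val = d + 1 :=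
    Nat.exists_eq_succ_of_ne_zero (by simpa [Fin.ext_iff, sub_eq_zero] using hj)
  have hj' : j = v₀ + ((d + 1 : ℕ) : Fin n) := by
    rw [← hd, Fin.cast_val_eq_self, add_sub_cancel]
  exact hj' ▸ key d (hd ▸ (j - v₀).isLt)

end Interleaving

section Tracking

variable {isGlob' : I → Prop} {n' : ℕ} {R : StepRel Q I n} {R' : StepRel Q I n'}

/-- Process `u` of `y` replays the local run of process `v` of `x`: after `m` steps of `y`,
the moves of `v` before position `c m` of `x` have been replayed. -/
structure Tracks (y : SysRun P isGlob' n' R') (u : Fin n') (x : SysRun P isGlob n R) (v : Fin n)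
    (c : ℕ → ℕ) : Prop where
  zero : c 0 = 0
  mem : ∀ m, u ∈ y.sched m → ∃ k, x.IsNextMove v (c m) k ∧ c (m + 1) = k + 1 ∧
    y.state m u = x.state k v ∧ y.inp m u = x.inp k v
  not_mem : ∀ m, u ∉ y.sched m → c (m + 1) = c m

variable {y : SysRun P isGlob' n' R'} {u : Fin n'} {x : SysRun P isGlob n R} {v : Fin n}
  {c : ℕ → ℕ}

theorem Tracks.count_eq (h : Tracks y u x v c) (m : ℕ) :
    Nat.count (u ∈ y.sched ·) m = Nat.count (v ∈ x.sched ·) (c m) := by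
  induction m with
  | zero => simp [h.zero]
  | succ m ih =>
    rw [Nat.count_succ]
    by_cases hu : u ∈ y.sched m
    · obtain ⟨k, hk, hc, -⟩ := h.mem m hu
      rw [if_pos hu, ih, hc, hk.count_succ fun _ => id, if_pos hk.2.1]
    · rw [if_neg hu, h.not_mem m hu, ih, add_zero]

theorem Tracks.movesInf (h : Tracks y u x v c) (hu : y.MovesInf u) : x.MovesInf v := by
  intro hfin
  set N := hfin.toFinset.card
  have hm := h.count_eq (Nat.nth (u ∈ y.sched ·) N + 1)
  rw [Nat.count_succ, Nat.count_nth_of_infinite hu, if_pos (Nat.nth_mem_of_infinite hu N)] at hm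
  have := Nat.count_le_card hfin (c (Nat.nth (u ∈ y.sched ·) N + 1))
  omega

theorem Tracks.localWord_eq (h : Tracks y u x v c) (hu : y.MovesInf u) :
    y.localWord u = x.localWord v := by
  ext t : 1
  obtain ⟨k, hk, -, hstate, hinp⟩ := h.mem _ (Nat.nth_mem_of_infinite hu t)
  have hidx : x.localIdx v t = k := by
    rw [localIdx, ← Nat.nth_count (p := (v ∈ x.sched ·)) hk.2.1, hk.count_eq fun _ => id,
      ← h.count_eq, Nat.count_nth_of_infinite hu]
  simp only [localWord, hidx, ← hstate, ← hinp]
  rfl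


end Tracking

section Simulation

/-- Positions of the run being simulated up to which the moves of `j` and of its partner `w` have
been replayed, and the state in which process 1 has been frozen, if it has. -/
structure SimCursor (Q : Type) where
  kj : ℕ
  kw : ℕ
  frozen : Option Q

variable {snd : O} {rcv : I} (x : SysRun P isGlob n (P.interleavingStep snd rcv)) (j w : Fin n)

/-- Process 1 of the ring of size two follows `w` until it is frozen in a state of its own. -/
def pairState (c : SimCursor Q) : Fin 2 → Q :=
  ![x.state c.kj j, c.frozen.getD (x.state c.kw w)]

def IsTokenPass (a b : ℕ) : Prop :=
  x.Sends snd j a ∧ x.Receives rcv w b ∨ x.Receives rcv j a ∧ x.Sends snd w b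

inductive SimStep : SimCursor Q → Set (Fin 2) × (Fin 2 → I → Prop) → SimCursor Q → Prop
  | moveJ (c : SimCursor Q) (a : ℕ) (ha : x.IsNextMove j c.kj a)
      (hr : ¬ x.Receives rcv j a) (hs : ¬ x.Sends snd j a) :
      SimStep c ({0}, ![x.inp a j, fun _ => False]) { c with kj := a + 1 }
  -- `w` only moves on its own towards a pending token event, so that `j` is never starved
  | moveW (c : SimCursor Q) (b l : ℕ) (hc : c.frozen = none) (hb : x.IsNextMove w c.kw b)
      (hr : ¬ x.Receives rcv w b) (hs : ¬ x.Sends snd w b)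
      (hl : c.kw ≤ l) (hpend : x.Receives rcv w l ∨ x.Sends snd w l) :
      SimStep c ({1}, ![fun _ => False, x.inp b w]) { c with kw := b + 1 }
  | pass (c : SimCursor Q) (a b : ℕ) (hc : c.frozen = none) (ha : x.IsNextMove j c.kj a)
      (hb : x.IsNextMove w c.kw b) (hev : x.IsTokenPass j w a b) :
      SimStep c ({0, 1}, ![x.inp a j, x.inp b w]) ⟨a + 1, b + 1, none⟩
  -- `w` never receives the token `j` sends: process 1 takes a receiving transition of its own
  -- and stays frozen from then on
  | fake (c : SimCursor Q) (a : ℕ) (q : Q) (hc : c.frozen = none) (ha : x.IsNextMove j c.kj a)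
      (hs : x.Sends snd j a) (hq : P.delta (x.state c.kw w) (· = rcv) q) :
      SimStep c ({0, 1}, ![x.inp a j, (· = rcv)]) { c with kj := a + 1, frozen := some q }

variable {x j w} {c c' : SimCursor Q} {d : Set (Fin 2) × (Fin 2 → I → Prop)}

theorem SimStep.interleavingStep (hP : P.IsTemplate snd rcv) (h : x.SimStep j w c d c') :
    P.interleavingStep snd rcv d.1 (x.pairState j w c) d.2 (x.pairState j w c') := by
  cases h with
  | moveJ a ha hr hs =>
    refine P.interleavingStep_fin_two_single snd rcv 0 ?_ ?_ ?_ rfl <;>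
      simp only [pairState, Matrix.cons_val_zero, ← ha.state_eq]
    · exact fun h => hs ⟨ha.2.1, h⟩
    · exact fun h => hr ⟨ha.2.1, h⟩
    · exact x.delta_of_mem ha.2.1
  | moveW b l hc hb hr hs =>
    refine P.interleavingStep_fin_two_single snd rcv 1 ?_ ?_ ?_ rfl <;>
      simp only [pairState, Matrix.cons_val_one, Matrix.cons_val_fin_one, hc, Option.getD_none,
        ← hb.state_eq]
    · exact fun h => hs ⟨hb.2.1, h⟩
    · exact fun h => hr ⟨hb.2.1, h⟩
    · exact x.delta_of_mem hb.2.1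
  | pass a b hc ha hb hev =>
    have hdelta : ∀ u, P.delta (![x.state a j, x.state b w] u) (![x.inp a j, x.inp b w] u)
        (![x.state (a + 1) j, x.state (b + 1) w] u) := by
      intro u
      fin_cases u
      exacts [x.delta_of_mem ha.2.1, x.delta_of_mem hb.2.1]
    simp only [pairState, hc, Option.getD_none, ← ha.state_eq, ← hb.state_eq]
    rcases hev with ⟨hsj, hrw⟩ | ⟨hrj, hsw⟩
    · refine P.interleavingStep_fin_two_pass snd rcv 0 ?_ ?_ ?_ ?_ hdelta <;> simp only
        [ringSucc_zero_fin_two, Matrix.cons_val_zero, Matrix.cons_val_one, Matrix.cons_val_fin_one]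
      exacts [hsj.2, fun h => hrw.not_sends hP ⟨hb.2.1, h⟩, hrw.2, hsj.not_rcv hP]
    · refine P.interleavingStep_fin_two_pass snd rcv 1 ?_ ?_ ?_ ?_ hdelta <;> simp only
        [ringSucc_one_fin_two, Matrix.cons_val_zero, Matrix.cons_val_one, Matrix.cons_val_fin_one]
      exacts [hsw.2, fun h => hrj.not_sends hP ⟨ha.2.1, h⟩, hrj.2, hsw.not_rcv hP]
  | fake a q hc ha hs hq =>
    refine P.interleavingStep_fin_two_pass snd rcv 0 ?_ ?_ ?_ ?_ fun u => ?_ <;>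
      simp only [pairState, hc, Option.getD_none, ringSucc_zero_fin_two, Matrix.cons_val_zero,
        Matrix.cons_val_one, Matrix.cons_val_fin_one, ← ha.state_eq]
    · exact hs.2
    · exact fun h => hP.not_rcv_of_tok hq (hP.tok_of_lam h) rfl
    · exact hs.not_rcv hP
    · fin_cases u
      exacts [x.delta_of_mem ha.2.1, hq]

namespace SimStep

theorem tracks_zero (hs : x.SimStep j w c d c') :
    (0 ∈ d.1 → ∃ k, x.IsNextMove j c.kj k ∧ c'.kj = k + 1 ∧
      x.pairState j w c 0 = x.state k j ∧ d.2 0 = x.inp k j) ∧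
    (0 ∉ d.1 → c'.kj = c.kj) := by
  cases hs with
  | moveJ a ha _ _ | pass a _ _ ha _ _ | fake a _ _ ha _ _ =>
    exact ⟨fun _ => ⟨a, ha, rfl, ha.state_eq.symm, rfl⟩, fun h0 => absurd (by simp) h0⟩
  | moveW => exact ⟨fun h0 => absurd h0 (by simp), fun _ => rfl⟩

theorem tracks_one (hs : x.SimStep j w c d c') (hc' : c'.frozen = none) :
    (1 ∈ d.1 → ∃ k, x.IsNextMove w c.kw k ∧ c'.kw = k + 1 ∧
      x.pairState j w c 1 = x.state k w ∧ d.2 1 = x.inp k w) ∧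
    (1 ∉ d.1 → c'.kw = c.kw) := by
  cases hs with
  | moveJ => exact ⟨fun h1 => absurd h1 (by simp), fun _ => rfl⟩
  | moveW b _ hc hb | pass _ b hc _ hb =>
    refine ⟨fun _ => ⟨b, hb, rfl, ?_, rfl⟩, fun h1 => absurd (by simp) h1⟩
    simp [pairState, hc, hb.state_eq]
  | fake => simp at hc'

theorem frozen_of_frozen (hs : x.SimStep j w c d c') (hc : c.frozen ≠ none) :
    c'.frozen ≠ none ∧ 1 ∉ d.1 := by
  cases hs with
  | moveJ => exact ⟨hc, by simp⟩
  | moveW _ _ hc' | pass _ _ hc' | fake _ _ hc' => exact absurd hc' hc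

theorem moveW_of_not_mem (hs : x.SimStep j w c d c') (h0 : 0 ∉ d.1) :
    ∃ b, x.IsNextMove w c.kw b ∧ ¬ x.Receives rcv w b ∧ ¬ x.Sends snd w b ∧
      c'.kw = b + 1 ∧ ∃ l, c.kw ≤ l ∧ (x.Receives rcv w l ∨ x.Sends snd w l) := by
  cases hs with
  | moveW b l _ hb hr hs hl hpend => exact ⟨b, hb, hr, hs, rfl, l, hl, hpend⟩
  | moveJ | pass | fake => exact absurd (by simp) h0

end SimStep

variable (x j w)

def Synced (a b : ℕ) : Prop :=
  Nat.count (x.Receives rcv j) a = Nat.count (x.Sends snd w) b ∧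
    Nat.count (x.Sends snd j) a = Nat.count (x.Receives rcv w) b

def Quiet (a : ℕ) : Prop :=
  ∀ k, a ≤ k → ¬ x.Receives rcv j k ∧ ¬ x.Sends snd j k

def SimInv (c : SimCursor Q) : Prop :=
  match c.frozen with
  | none => x.Synced j w c.kj c.kw
  | some _ => x.Quiet j c.kj

structure Simulable : Prop where
  template : P.IsTemplate snd rcv
  movesInf : x.MovesInf j
  init : P.tok (x.state 0 j) ↔ ¬ P.tok (x.state 0 w)
  count_receives_le : ∀ K, Nat.count (x.Receives rcv j) K ≤ Nat.count (x.Sends snd w) K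

variable {x j w} {a b kj kw : ℕ}

theorem Synced.moveJ (hS : x.Synced j w kj kw) (ha : x.IsNextMove j kj a)
    (hr : ¬ x.Receives rcv j a) (hs : ¬ x.Sends snd j a) : x.Synced j w (a + 1) kw := by
  rw [Synced, ha.count_succ fun _ h => h.1, ha.count_succ fun _ h => h.1, if_neg hr, if_neg hs]
  exact hS

theorem Synced.moveW (hS : x.Synced j w kj kw) (hb : x.IsNextMove w kw b)
    (hr : ¬ x.Receives rcv w b) (hs : ¬ x.Sends snd w b) : x.Synced j w kj (b + 1) := by
  rw [Synced, hb.count_succ fun _ h => h.1, hb.count_succ fun _ h => h.1, if_neg hr, if_neg hs]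
  exact hS

theorem Synced.pass (hS : x.Synced j w kj kw) (ha : x.IsNextMove j kj a)
    (hb : x.IsNextMove w kw b) (hr : x.Receives rcv j a ↔ x.Sends snd w b)
    (hs : x.Sends snd j a ↔ x.Receives rcv w b) : x.Synced j w (a + 1) (b + 1) := by
  rw [Synced, ha.count_succ (E := x.Receives rcv j) fun _ h => h.1,
    ha.count_succ (E := x.Sends snd j) fun _ h => h.1,
    hb.count_succ (E := x.Sends snd w) fun _ h => h.1,
    hb.count_succ (E := x.Receives rcv w) fun _ h => h.1, hS.1, hS.2]
  simp only [hr, hs, and_self]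

theorem Quiet.mono (hQ : x.Quiet j kj) (h : kj ≤ a) : x.Quiet j a :=
  fun k hk => hQ k (h.trans hk)

namespace Simulable

theorem tok_iff (h : x.Simulable j w) (hS : x.Synced j w a b) :
    P.tok (x.state a j) ↔ ¬ P.tok (x.state b w) :=
  x.tok_iff_not_tok_of_count_eq h.template h.init hS.1 hS.2

theorem not_receives_of_not_sends (h : x.Simulable j w)
    (hab : Nat.count (x.Receives rcv j) a = Nat.count (x.Sends snd w) b)
    (hw : ∀ k, b ≤ k → ¬ x.Sends snd w k) : ∀ k, a ≤ k → ¬ x.Receives rcv j k := by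
  intro k hk hrk
  have hj : Nat.count (x.Receives rcv j) a < Nat.count (x.Receives rcv j) (k + 1) :=
    (Nat.count_monotone _ hk).trans_lt (Nat.count_strict_mono hrk k.lt_succ_self)
  have hw' : Nat.count (x.Sends snd w) (k + 1) ≤ Nat.count (x.Sends snd w) b := by
    rcases le_total (k + 1) b with hkb | hbk
    · exact Nat.count_monotone _ hkb
    · exact (Nat.count_eq_count_of_forall_not hbk fun m hm _ => hw m hm).le
  have := h.count_receives_le (k + 1)
  omega

theorem exists_simStep_of_isTokenPass (h : x.Simulable j w) {c : SimCursor Q} {l : ℕ}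
    (hc : c.frozen = none) (hS : x.Synced j w c.kj c.kw) (ha : x.IsNextMove j c.kj a)
    (hl : c.kw ≤ l) (hpass : x.IsTokenPass j w a l) :
    ∃ d c', x.SimStep j w c d c' ∧ x.SimInv j w c' := by
  have hP := h.template
  have hwl : w ∈ x.sched l := by rcases hpass with ⟨-, h⟩ | ⟨-, h⟩ <;> exact h.1
  obtain ⟨b, hb, hbl⟩ := x.exists_isNextMove_le hl hwl
  by_cases hpass' : x.IsTokenPass j w a b
  · refine ⟨_, _, .pass c a b hc ha hb hpass', hS.pass ha hb ?_ ?_⟩ <;>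
      rcases hpass' with ⟨hsj, hrw⟩ | ⟨hrj, hsw⟩
    · exact iff_of_false (fun hrj => hrj.not_sends hP hsj) (hrw.not_sends hP)
    · exact iff_of_true hrj hsw
    · exact iff_of_true hsj hrw
    · exact iff_of_false (hrj.not_sends hP) (fun hrw => hrw.not_sends hP hsw)
  · have hidle : ¬ x.Receives rcv w b ∧ ¬ x.Sends snd w b := by
      have htok := h.tok_iff hS
      rw [← ha.state_eq, ← hb.state_eq] at htok
      rcases hpass with ⟨hsj, -⟩ | ⟨hrj, -⟩
      · exact ⟨fun hrw => hpass' (.inl ⟨hsj, hrw⟩),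
          fun hsw => htok.1 (hP.tok_of_lam hsj.2) (hP.tok_of_lam hsw.2)⟩
      · exact ⟨fun hrw => hrw.not_tok hP (not_not.1 (mt htok.2 (hrj.not_tok hP))),
          fun hsw => hpass' (.inr ⟨hrj, hsw⟩)⟩
    refine ⟨_, _, .moveW c b l hc hb hidle.1 hidle.2 hl ?_, ?_⟩
    · rcases hpass with ⟨-, h⟩ | ⟨-, h⟩
      exacts [.inl h, .inr h]
    · simp only [SimInv, hc]
      exact hS.moveW hb hidle.1 hidle.2

theorem exists_simStep_of_synced (h : x.Simulable j w) {c : SimCursor Q}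
    (hc : c.frozen = none) (hS : x.Synced j w c.kj c.kw) (ha : x.IsNextMove j c.kj a) :
    ∃ d c', x.SimStep j w c d c' ∧ x.SimInv j w c' := by
  have hP := h.template
  by_cases hidle : ¬ x.Receives rcv j a ∧ ¬ x.Sends snd j a
  · refine ⟨_, _, .moveJ c a ha hidle.1 hidle.2, ?_⟩
    simp only [SimInv, hc]
    exact hS.moveJ ha hidle.1 hidle.2
  by_cases hpass : ∃ l, c.kw ≤ l ∧ x.IsTokenPass j w a l
  · obtain ⟨l, hl, hpass⟩ := hpass
    exact h.exists_simStep_of_isTokenPass hc hS ha hl hpass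
  simp only [not_exists, not_and] at hpass
  have hsj : x.Sends snd j a := by
    by_contra hsj
    have hrj : x.Receives rcv j a := by tauto
    refine h.not_receives_of_not_sends hS.1 (fun k hk hsw => ?_) a ha.1 hrj
    exact hpass k hk (.inr ⟨hrj, hsw⟩)
  have hw : ¬ P.tok (x.state c.kw w) := by
    rw [← h.tok_iff hS, ← ha.state_eq]
    exact hP.tok_of_lam hsj.2
  obtain ⟨q, hq⟩ := hP.exists_delta (i := (· = rcv)) fun ht => absurd ht hw
  refine ⟨_, _, .fake c a q hc ha hsj hq, ?_⟩
  -- `w` never receives again, hence never sends again, hence `j` never receives again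
  have hnsw := x.not_sends_of_not_receives hP hw fun k hk hrw => hpass k hk (.inl ⟨hsj, hrw⟩)
  have hnrj := h.not_receives_of_not_sends hS.1 hnsw
  have := ha.1
  have hnt : ¬ P.tok (x.state (a + 1) j) := hP.not_tok_of_lam (x.delta_of_mem ha.2.1) hsj.2
  have hnsj := x.not_sends_of_not_receives hP hnt fun k hk => hnrj k (by omega)
  show x.Quiet j (a + 1)
  exact fun k hk => ⟨hnrj k (by omega), hnsj k hk⟩

theorem exists_simStep (h : x.Simulable j w) {c : SimCursor Q} (hc : x.SimInv j w c) :
    ∃ d c', x.SimStep j w c d c' ∧ x.SimInv j w c' := by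
  obtain ⟨a, ha⟩ := h.movesInf.exists_isNextMove c.kj
  cases hf : c.frozen with
  | none =>
    rw [SimInv, hf] at hc
    exact h.exists_simStep_of_synced hf hc ha
  | some q =>
    rw [SimInv, hf] at hc
    obtain ⟨hr, hs⟩ := hc a ha.1
    refine ⟨_, _, .moveJ c a ha hr hs, ?_⟩
    simp only [SimInv, hf]
    exact hc.mono (ha.1.trans a.le_succ)

variable (h : x.Simulable j w)

noncomputable def simNext (c : {c : SimCursor Q // x.SimInv j w c}) :
    (Set (Fin 2) × (Fin 2 → I → Prop)) × {c : SimCursor Q // x.SimInv j w c} :=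
  let e := h.exists_simStep c.2
  (e.choose, ⟨e.choose_spec.choose, e.choose_spec.choose_spec.2⟩)

noncomputable def cursor (m : ℕ) : {c : SimCursor Q // x.SimInv j w c} :=
  (fun c => (h.simNext c).2)^[m] ⟨⟨0, 0, none⟩, by simp [SimInv, Synced]⟩

theorem cursor_succ (m : ℕ) : h.cursor (m + 1) = (h.simNext (h.cursor m)).2 :=
  Function.iterate_succ_apply' _ _ _

theorem simStep_cursor (m : ℕ) :
    x.SimStep j w (h.cursor m).1 (h.simNext (h.cursor m)).1 (h.cursor (m + 1)).1 := by
  rw [h.cursor_succ]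
  exact (h.exists_simStep (h.cursor m).2).choose_spec.choose_spec.1

noncomputable def twoRing : SysRun P (fun _ => False) 2 (P.interleavingStep snd rcv) where
  state m := x.pairState j w (h.cursor m).1
  inp m := (h.simNext (h.cursor m)).1.2
  sched m := (h.simNext (h.cursor m)).1.1
  init_state v := by
    fin_cases v
    exacts [x.init_state j, x.init_state w]
  init_token := Fin.existsUnique_fin_two h.init
  glob_consistent _ _ _ _ hglob := hglob.elim
  step m := (h.simStep_cursor m).interleavingStep h.template

theorem tracks_zero : h.twoRing.Tracks 0 x j fun m => (h.cursor m).1.kj where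
  zero := rfl
  mem m := (h.simStep_cursor m).tracks_zero.1
  not_mem m := (h.simStep_cursor m).tracks_zero.2

theorem tracks_one (hc : ∀ m, (h.cursor m).1.frozen = none) :
    h.twoRing.Tracks 1 x w fun m => (h.cursor m).1.kw where
  zero := rfl
  mem m := ((h.simStep_cursor m).tracks_one (hc (m + 1))).1
  not_mem m := ((h.simStep_cursor m).tracks_one (hc (m + 1))).2

theorem frozen_eq_none (h1 : h.twoRing.MovesInf 1) (m : ℕ) : (h.cursor m).1.frozen = none := by
  by_contra hm
  have hfrozen : ∀ m', m ≤ m' → (h.cursor m').1.frozen ≠ none := by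
    intro m' hm'
    induction m', hm' using Nat.le_induction with
    | base => exact hm
    | succ m' _ ih => exact ((h.simStep_cursor m').frozen_of_frozen ih).1
  obtain ⟨m', h1m', hmm'⟩ := h1.exists_gt m
  exact ((h.simStep_cursor m').frozen_of_frozen (hfrozen m' hmm'.le)).2 h1m'

theorem exists_mem_zero_of_pending {l : ℕ} (hev : x.Receives rcv w l ∨ x.Sends snd w l)
    (m : ℕ) (hl : (h.cursor m).1.kw ≤ l) : ∃ m', m ≤ m' ∧ 0 ∈ h.twoRing.sched m' := by
  induction hD : l - (h.cursor m).1.kw using Nat.strong_induction_on generalizing m with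
  | _ D ih =>
  by_cases h0 : 0 ∈ h.twoRing.sched m
  · exact ⟨m, le_rfl, h0⟩
  obtain ⟨b, hb, hr, hs, hkw, -⟩ := (h.simStep_cursor m).moveW_of_not_mem h0
  have hwl : w ∈ x.sched l := by rcases hev with h | h <;> exact h.1
  have hbl : b < l := (hb.le_of_mem hl hwl).lt_of_ne (by rintro rfl; tauto)
  have := hb.1
  obtain ⟨m', hm', h0'⟩ := ih _ (by omega) (m + 1) (by omega) rfl
  exact ⟨m', by omega, h0'⟩

theorem movesInf_zero : h.twoRing.MovesInf 0 := by
  refine Set.infinite_of_forall_exists_gt fun m => ?_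
  suffices ∃ m', m + 1 ≤ m' ∧ 0 ∈ h.twoRing.sched m' by
    obtain ⟨m', hm', h0⟩ := this
    exact ⟨m', h0, hm'⟩
  by_cases h0 : 0 ∈ h.twoRing.sched (m + 1)
  · exact ⟨m + 1, le_rfl, h0⟩
  obtain ⟨-, -, -, -, -, l, hl, hev⟩ := (h.simStep_cursor (m + 1)).moveW_of_not_mem h0
  exact h.exists_mem_zero_of_pending hev (m + 1) hl

theorem sat_of_satSpec1_two (h : x.Simulable j w) {ass φ : LTL (O ⊕ I)}
    (h2 : SatSpec1 P (fun _ => False) 2 (P.interleavingStep snd rcv) ass φ)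
    (hass : ∀ i, x.LocalSat ass i) : LTL.Sat (x.localWord j) φ 0 := by
  have hassY : ∀ i, h.twoRing.LocalSat ass i := by
    refine Fin.forall_fin_two.2 ⟨fun h0 => ?_, fun h1 => ?_⟩
    · rw [h.tracks_zero.localWord_eq h0]
      exact hass j h.movesInf
    · have htracks := h.tracks_one (h.frozen_eq_none h1)
      rw [htracks.localWord_eq h1]
      exact hass w (htracks.movesInf h1)
  have := h2 _ hassY 0 h.movesInf_zero
  rwa [h.tracks_zero.localWord_eq h.movesInf_zero] at this

end Simulable

end Simulation

section Cutoff

variable {snd : O} {rcv : I}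

/-- If `j` starts with the token its partner is its ring predecessor, otherwise the initial
token holder. -/
theorem exists_simulable (hP : P.IsTemplate snd rcv) (hn : 2 ≤ n)
    (x : SysRun P isGlob n (P.interleavingStep snd rcv)) {j : Fin n} (hj : x.MovesInf j) :
    ∃ w, x.Simulable j w := by
  have : NeZero n := ⟨by omega⟩
  obtain ⟨v₀, hv₀, huniq⟩ := x.init_token
  by_cases hj0 : P.tok (x.state 0 j)
  · refine ⟨j - 1, hP, hj, ⟨fun _ hp => sub_one_ne_self hn j ?_, fun _ => hj0⟩,
      fun K => ?_⟩
    · exact (huniq _ hp).trans (huniq j hj0).symm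
    · have hpred := x.receives_ringSucc (j - 1)
      rw [ringSucc_sub_one] at hpred
      rw [hpred]
  · exact ⟨v₀, hP, hj, ⟨fun h => absurd h hj0, fun h => absurd hv₀ h⟩,
      x.count_receives_le_count_sends_of_tok hP huniq (by rintro rfl; exact hj0 hv₀)⟩

theorem satSpec1_of_satSpec1_two (hP : P.IsTemplate snd rcv) (hn : 2 ≤ n)
    {ass φ : LTL (O ⊕ I)}
    (h2 : SatSpec1 P (fun _ => False) 2 (P.interleavingStep snd rcv) ass φ) :
    SatSpec1 P isGlob n (P.interleavingStep snd rcv) ass φ := by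
  intro x hass j hj
  obtain ⟨w, hw⟩ := exists_simulable hP hn x hj
  exact hw.sat_of_satSpec1_two h2 hass

end Cutoff

end SysRun

/-- Corollary of the cutoff theorem, [Jacobs14]:
the parameterized synthesis problem of interleaving token rings with no global inputs
for specifications `∀i. A_{∀i.ass(i)} φ(i)` reduces to the synthesis problem for the
token ring of size 2: a process template realizing the specification in rings of all
sizes `n ≥ 2` exists iff one realizing it in the ring of size 2 exists. -/
theorem parameterized_synthesis_reduces_to_size_two
    {O I : Type} (snd : O) (rcv : I) (ass φ : LTL (O ⊕ I)) :
    (∃ T : TemplateF O I snd rcv,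
        ∀ n, 2 ≤ n → SatSpec1 T.P (fun _ => False) n (T.P.interleavingStep snd rcv) ass φ) ↔
    (∃ T : TemplateF O I snd rcv,
        SatSpec1 T.P (fun _ => False) 2 (T.P.interleavingStep snd rcv) ass φ) :=
  ⟨fun ⟨T, hT⟩ => ⟨T, hT 2 le_rfl⟩,
    fun ⟨T, hT⟩ => ⟨T, fun _ hn => SysRun.satSpec1_of_satSpec1_two T.ax hn hT⟩⟩
end

section
/- Soundness of localization of assumptions in token rings: let TR(j) denote the conjunction of the local token-ring guarantees □(send_j → tok_j), □(tok_j ∧ ¬send_j → X tok_j), □(¬tok_j ∧ ¬rcv_j → X ¬tok_j), and □(tok_j → ◇send_j), interpreted on the local run of process j. Let ass(j) and gua(j) be LTL formulas over the inputs and outputs of process j. Suppose that for some n ≥ 2 the synchronous token ring P^{R(n)} satisfies the 1-indexed specification ∀j. A[ (ass(j) → TR(j)) ∧ ((ass(j) ∧ □◇tok_j) → gua(j)) ]. Then P^{R(n)} satisfies A_{∀i.ass(i)} ∀j. (gua(j) ∧ TR(j)): every run on which every process's local run satisfies ass also has every process's local run satisfying gua(j) ∧ TR(j). -/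
open LTL in
/-- The token-ring guarantees `TR(j)`:
`□(send → tok) ∧ □(tok ∧ ¬send → X tok) ∧ □(¬tok ∧ ¬rcv → X ¬tok) ∧ □(tok → ◇send)`,
as an LTL formula over the outputs (`snd`, and the output `tokV` marking token states)
and inputs (`rcv`) of a single process. -/
def TRformula {O I : Type} (snd tokV : O) (rcv : I) : LTL (O ⊕ I) :=
  (alw ((atom (Sum.inl snd)).imp (atom (Sum.inl tokV)))).conj <|
  (alw (((atom (Sum.inl tokV)).conj (neg (atom (Sum.inl snd)))).imp
      (next (atom (Sum.inl tokV))))).conj <|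
  (alw (((neg (atom (Sum.inl tokV))).conj (neg (atom (Sum.inr rcv)))).imp
      (next (neg (atom (Sum.inl tokV)))))).conj
  (alw ((atom (Sum.inl tokV)).imp (ev (atom (Sum.inl snd)))))

/-!
In the synchronous ring exactly one process holds the token at every step: a holder that
does not send keeps it, and a sending holder passes it to its ring successor. Under the
assumptions every local run satisfies `TR`, so every holder eventually sends; hence the
token travels around the whole ring forever and every process holds it infinitely often.
This discharges the premise `□◇tok_j` of the guarantee, and `gua(j) ∧ TR(j)` follows from
the localized specification.
-/

namespace LTL

variable {α : Type} (w : ℕ → α → Prop)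

@[simp]
theorem sat_imp (φ ψ : LTL α) (k : ℕ) : Sat w (φ.imp ψ) k ↔ (Sat w φ k → Sat w ψ k) := by
  simp only [imp, Sat]
  tauto

@[simp]
theorem sat_ev (φ : LTL α) (k : ℕ) : Sat w (ev φ) k ↔ ∃ m ≥ k, Sat w φ m := by
  simp only [ev, Sat, and_true, implies_true]

@[simp]
theorem sat_alw (φ : LTL α) (k : ℕ) : Sat w (alw φ) k ↔ ∀ m ≥ k, Sat w φ m := by
  simp only [alw, Sat, sat_ev, not_exists, not_and, not_not]

end LTL

theorem ringSucc_iterate_val {n : ℕ} (d : ℕ) (v : Fin n) :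
    (ringSucc^[d] v).val = (v.val + d) % n := by
  induction d with
  | zero => simp [Nat.mod_eq_of_lt v.isLt]
  | succ d ih =>
    rw [Function.iterate_succ_apply']
    change ((ringSucc^[d] v).val + 1) % n = _
    rw [ih, Nat.mod_add_mod, Nat.add_assoc]

theorem exists_ringSucc_iterate_eq {n : ℕ} (v i : Fin n) : ∃ d, ringSucc^[d] v = i := by
  refine ⟨i.val + n - v.val, Fin.ext ?_⟩
  rw [ringSucc_iterate_val, Nat.add_sub_of_le (by omega), Nat.add_mod_right,
    Nat.mod_eq_of_lt i.isLt]

namespace RawProc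

variable {Q O I : Type} {P : RawProc Q O I} {snd : O} {rcv : I} {n : ℕ}

section IsTemplate

variable {q q' : Q} {ins : I → Prop}

theorem IsTemplate.tok_of_send (hP : P.IsTemplate snd rcv) (hq : P.lam q snd) : P.tok q :=
  hP.2.2.1 q hq

theorem IsTemplate.not_rcv_of_tok_s12 (hP : P.IsTemplate snd rcv) (hδ : P.delta q ins q')
    (hq : P.tok q) : ¬ ins rcv :=
  (hP.2.2.2.1 q ins q' hδ).1 hq

theorem IsTemplate.not_tok_of_send (hP : P.IsTemplate snd rcv) (hδ : P.delta q ins q')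
    (hq : P.lam q snd) : ¬ P.tok q' :=
  (hP.2.2.2.1 q ins q' hδ).2.1 hq

theorem IsTemplate.tok_of_tok_of_not_send (hP : P.IsTemplate snd rcv)
    (hδ : P.delta q ins q') (hq : P.tok q) (hs : ¬ P.lam q snd) : P.tok q' :=
  (hP.2.2.2.1 q ins q' hδ).2.2.1 hq hs

theorem IsTemplate.tok_of_rcv_s12 (hP : P.IsTemplate snd rcv) (hδ : P.delta q ins q')
    (hq : ¬ P.tok q) (hr : ins rcv) : P.tok q' :=
  (hP.2.2.2.1 q ins q' hδ).2.2.2.1 hq hr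

theorem IsTemplate.not_tok_of_not_rcv_s12 (hP : P.IsTemplate snd rcv) (hδ : P.delta q ins q')
    (hq : ¬ P.tok q) (hr : ¬ ins rcv) : ¬ P.tok q' :=
  (hP.2.2.2.1 q ins q' hδ).2.2.2.2 hq hr

end IsTemplate

def HoldsTokenAlone (P : RawProc Q O I) (s : Fin n → Q) (v : Fin n) : Prop :=
  P.tok (s v) ∧ ∀ u, u ≠ v → ¬ P.tok (s u)

theorem HoldsTokenAlone.eq_of_send (hP : P.IsTemplate snd rcv) {s : Fin n → Q} {v u : Fin n}
    (hv : P.HoldsTokenAlone s v) (hu : P.lam (s u) snd) : u = v := by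
  by_contra huv
  exact hv.2 u huv (hP.tok_of_send hu)

theorem HoldsTokenAlone.syncStep_of_not_send (hP : P.IsTemplate snd rcv) {M : Set (Fin n)}
    {s s' : Fin n → Q} {inp : Fin n → I → Prop} {v : Fin n} (hv : P.HoldsTokenAlone s v)
    (hquiet : ¬ P.lam (s v) snd) (hstep : P.syncStep snd rcv M s inp s') :
    P.HoldsTokenAlone s' v := by
  obtain ⟨rfl, ⟨hint, -⟩ | ⟨w, hpass⟩⟩ := hstep
  · obtain ⟨hv_quiet, -, hv_step⟩ := hint v trivial
    refine ⟨hP.tok_of_tok_of_not_send hv_step hv.1 hv_quiet, fun u hu => ?_⟩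
    obtain ⟨-, hu_rcv, hu_step⟩ := hint u trivial
    exact hP.not_tok_of_not_rcv_s12 hu_step (hv.2 u hu) hu_rcv
  · obtain ⟨-, -, hw_send, -⟩ := hpass
    exact absurd (hv.eq_of_send hP hw_send ▸ hw_send) hquiet

theorem HoldsTokenAlone.syncStep_of_send (hP : P.IsTemplate snd rcv) {M : Set (Fin n)}
    {s s' : Fin n → Q} {inp : Fin n → I → Prop} {v : Fin n} (hv : P.HoldsTokenAlone s v)
    (hsend : P.lam (s v) snd) (hstep : P.syncStep snd rcv M s inp s') :
    P.HoldsTokenAlone s' (ringSucc v) := by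
  obtain ⟨rfl, ⟨hint, -⟩ | ⟨w, hpass⟩⟩ := hstep
  · exact absurd hsend (hint v trivial).1
  obtain ⟨-, -, hw_send, -, hrcv, hrcv_only, hmove, -⟩ := hpass
  have hsender := hv.eq_of_send hP hw_send
  subst w
  -- The receiver reads `rcv`, which no token state does, so it differs from the sender.
  have hsucc_ne : ringSucc v ≠ v := fun he =>
    hP.not_rcv_of_tok_s12 (hmove v trivial) hv.1 (he ▸ hrcv)
  refine ⟨hP.tok_of_rcv_s12 (hmove _ trivial) (hv.2 _ hsucc_ne) hrcv, fun u hu => ?_⟩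
  by_cases huv : u = v
  · subst huv
    exact hP.not_tok_of_send (hmove u trivial) hsend
  · exact hP.not_tok_of_not_rcv_s12 (hmove u trivial) (hv.2 u huv) (hrcv_only u trivial hu)

end RawProc

namespace SysRun

variable {Q O I : Type} {P : RawProc Q O I} {snd : O} {rcv : I} {isGlob : I → Prop} {n : ℕ}
  (x : SysRun P isGlob n (P.syncStep snd rcv))

theorem movesInf_of_syncStep (j : Fin n) : x.MovesInf j := by
  have hall : {k | j ∈ x.sched k} = Set.univ := by
    ext k
    simp [(x.step k).1]
  simp only [MovesInf, hall, Set.infinite_univ]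

theorem localWord_of_syncStep (j : Fin n) :
    x.localWord j = fun k => Sum.elim (P.lam (x.state k j)) (x.inp k j) := by
  have hidx (k : ℕ) : x.localIdx j k = k :=
    Nat.nth_of_forall fun l _ => by simp [(x.step l).1]
  funext k
  rw [localWord, hidx]

theorem exists_holdsTokenAlone (hP : P.IsTemplate snd rcv) (k : ℕ) :
    ∃ v, P.HoldsTokenAlone (x.state k) v := by
  induction k with
  | zero =>
    obtain ⟨v, hv, huniq⟩ := x.init_token
    exact ⟨v, hv, fun u hu ht => hu (huniq u ht)⟩
  | succ k ih =>
    obtain ⟨v, hv⟩ := ih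
    by_cases hsend : P.lam (x.state k v) snd
    · exact ⟨_, hv.syncStep_of_send hP hsend (x.step k)⟩
    · exact ⟨v, hv.syncStep_of_not_send hP hsend (x.step k)⟩

theorem exists_holdsTokenAlone_ringSucc_of_send (hP : P.IsTemplate snd rcv) {v : Fin n}
    {k m : ℕ} (hkm : k ≤ m) (hv : P.HoldsTokenAlone (x.state k) v)
    (hsend : P.lam (x.state m v) snd) :
    ∃ m' ≥ k, P.HoldsTokenAlone (x.state m') (ringSucc v) := by
  obtain ⟨d, rfl⟩ := Nat.exists_eq_add_of_le hkm
  clear hkm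
  induction d generalizing k with
  | zero => exact ⟨k + 1, k.le_succ, hv.syncStep_of_send hP hsend (x.step k)⟩
  | succ d ih =>
    by_cases hnow : P.lam (x.state k v) snd
    · exact ⟨k + 1, k.le_succ, hv.syncStep_of_send hP hnow (x.step k)⟩
    · obtain ⟨m', hm', hm'v⟩ := ih (hv.syncStep_of_not_send hP hnow (x.step k))
        (by rwa [Nat.add_right_comm, Nat.add_assoc])
      exact ⟨m', by omega, hm'v⟩

theorem exists_holdsTokenAlone_iterate_ringSucc (hP : P.IsTemplate snd rcv)
    (hlive : ∀ v k, P.tok (x.state k v) → ∃ m ≥ k, P.lam (x.state m v) snd)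
    (d : ℕ) {k : ℕ} {v : Fin n} (hv : P.HoldsTokenAlone (x.state k) v) :
    ∃ m ≥ k, P.HoldsTokenAlone (x.state m) (ringSucc^[d] v) := by
  induction d with
  | zero => exact ⟨k, le_rfl, hv⟩
  | succ d ih =>
    obtain ⟨m, hkm, hm⟩ := ih
    obtain ⟨m', hmm', hsend⟩ := hlive _ m hm.1
    obtain ⟨m'', hm'', hnext⟩ := x.exists_holdsTokenAlone_ringSucc_of_send hP hmm' hm hsend
    exact ⟨m'', by omega, by rwa [Function.iterate_succ_apply']⟩

theorem exists_tok_ge (hP : P.IsTemplate snd rcv)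
    (hlive : ∀ v k, P.tok (x.state k v) → ∃ m ≥ k, P.lam (x.state m v) snd)
    (i : Fin n) (k : ℕ) : ∃ m ≥ k, P.tok (x.state m i) := by
  obtain ⟨v, hv⟩ := x.exists_holdsTokenAlone hP k
  obtain ⟨d, rfl⟩ := exists_ringSucc_iterate_eq v i
  obtain ⟨m, hkm, hm⟩ := x.exists_holdsTokenAlone_iterate_ringSucc hP hlive d hv
  exact ⟨m, hkm, hm.1⟩

end SysRun

open LTL in
theorem localization_of_assumptions_sound_general
    {O I : Type} (snd tokV : O) (rcv : I) (isGlob : I → Prop)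
    (T : Template O I snd rcv)
    (htok : ∀ q, T.P.lam q tokV ↔ T.P.tok q)
    (ass gua : LTL (O ⊕ I)) (n : ℕ)
    (h : ∀ x : SysRun T.P isGlob n (T.P.syncStep snd rcv), ∀ j,
        x.LocalSat ((ass.imp (TRformula snd tokV rcv)).conj
          ((ass.conj (alw (ev (atom (Sum.inl tokV))))).imp gua)) j) :
    ∀ x : SysRun T.P isGlob n (T.P.syncStep snd rcv),
      (∀ i, x.LocalSat ass i) →
      ∀ j, x.LocalSat (gua.conj (TRformula snd tokV rcv)) j := by
  intro x hass j _
  have hspec i := h x i (x.movesInf_of_syncStep i)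
  have hTR i : Sat (x.localWord i) (TRformula snd tokV rcv) 0 :=
    (sat_imp _ _ _ _).1 (hspec i).1 (hass i (x.movesInf_of_syncStep i))
  have hlive : ∀ v k, T.P.tok (x.state k v) → ∃ m ≥ k, T.P.lam (x.state m v) snd := by
    intro v k hk
    have hTR4 := (hTR v).2.2.2
    simp only [sat_alw, sat_imp, sat_ev, Sat, x.localWord_of_syncStep, Sum.elim_inl, htok] at hTR4
    exact hTR4 k k.zero_le hk
  have hrecur := x.exists_tok_ge T.ax hlive j
  refine ⟨(sat_imp _ _ _ _).1 (hspec j).2 ⟨hass j (x.movesInf_of_syncStep j), ?_⟩, hTR j⟩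
  simpa [x.localWord_of_syncStep, Sat, htok] using hrecur

open LTL in
/-- soundness of localization of assumptions in token rings:
if the synchronous ring `P^{R(n)}` (`n ≥ 2`) satisfies the 1-indexed specification
`∀j. A[(ass(j) → TR(j)) ∧ ((ass(j) ∧ □◇tok_j) → gua(j))]`, then it satisfies
`A_{∀i.ass(i)} ∀j.(gua(j) ∧ TR(j))`. Here `tokV` is an output marking exactly the
token states. -/
theorem localization_of_assumptions_sound
    {O I : Type} (snd tokV : O) (rcv : I) (isGlob : I → Prop)
    (T : Template O I snd rcv)
    (htok : ∀ q, T.P.lam q tokV ↔ T.P.tok q)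
    (ass gua : LTL (O ⊕ I)) (n : ℕ) (hn : 2 ≤ n)
    (h : ∀ x : SysRun T.P isGlob n (T.P.syncStep snd rcv), ∀ j,
        x.LocalSat ((ass.imp (TRformula snd tokV rcv)).conj
          ((ass.conj (alw (ev (atom (Sum.inl tokV))))).imp gua)) j) :
    ∀ x : SysRun T.P isGlob n (T.P.syncStep snd rcv),
      (∀ i, x.LocalSat ass i) →
      ∀ j, x.LocalSat (gua.conj (TRformula snd tokV rcv)) j :=
  localization_of_assumptions_sound_general snd tokV rcv isGlob T htok ass gua n h
end
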